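/- Let a ≥ c > 0, μ, ν ≥ 0, let f_n ≥ 0 for all n, and define f(μ;x) := Σ_{n≥0} f_n ((a+μ)_n/(c+μ)_n) x^n/n! as a formal power series. Then the series f(μ;x)f(ν;x) − f(0;x)f(μ+ν;x) has all coefficients ≤ 0; equivalently, Σ_{k=0}^{m} f_k f_{m−k}/(k!(m−k)!) · [(a+μ)_k(a+ν)_{m−k}/((c+μ)_k(c+ν)_{m−k}) − (a)_k(a+μ+ν)_{m−k}/((c)_k(c+μ+ν)_{m−k})] ≤ 0 for every m ≥ 1. -/

import Mathlib

noncomputable def risingFactorial (a : ℝ) (n : ℕ) : ℝ :=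
  ∏ i ∈ Finset.range n, (a + i)

noncomputable def psi (a c t : ℝ) (n : ℕ) : ℝ :=
  risingFactorial (a + t) n / risingFactorial (c + t) n

lemma rF_pos {x : ℝ} (hx : 0 < x) (n : ℕ) : 0 < risingFactorial x n :=
  Finset.prod_pos fun i _ => by
    have : (0:ℝ) ≤ i := Nat.cast_nonneg i
    linarith

lemma rF_add (x : ℝ) (k d : ℕ) :
    risingFactorial x (k + d) = risingFactorial x k * risingFactorial (x + k) d := by
  simp only [risingFactorial, Finset.prod_range_add]
  congr 1
  refine Finset.prod_congr rfl fun i _ => ?_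
  push_cast
  ring

lemma psi_pos {a c : ℝ} (t : ℝ) (n : ℕ) (hac : c ≤ a) (hct : 0 < c + t) :
    0 < psi a c t n := by
  have hat : 0 < a + t := by linarith
  exact div_pos (rF_pos hat n) (rF_pos hct n)

lemma psi_anti {a c : ℝ} {t t' : ℝ} (n : ℕ) (hac : c ≤ a) (hc : 0 < c)
    (ht : 0 ≤ t) (htt' : t ≤ t') : psi a c t' n ≤ psi a c t n := by
  have hct : (0:ℝ) < c + t := by linarith
  have hct' : (0:ℝ) < c + t' := by linarith
  rw [psi, psi, div_le_div_iff₀ (rF_pos (by linarith) n) (rF_pos (by linarith) n)]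
  simp only [risingFactorial, ← Finset.prod_mul_distrib]
  refine Finset.prod_le_prod (fun i _ => ?_) (fun i _ => ?_)
  · have hi : (0:ℝ) ≤ i := Nat.cast_nonneg i
    have h1 : (0:ℝ) < a + t' + i := by linarith
    have h2 : (0:ℝ) < c + t + i := by linarith
    positivity
  · have hi : (0:ℝ) ≤ i := Nat.cast_nonneg i
    nlinarith [mul_nonneg (sub_nonneg.2 hac) (sub_nonneg.2 htt')]

lemma psi_factA {a c : ℝ} (μ ν : ℝ) (n : ℕ) (hac : c ≤ a) (hc : 0 < c)
    (hμ : 0 ≤ μ) (hν : 0 ≤ ν) :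
    psi a c μ n * psi a c ν n ≤ psi a c 0 n * psi a c (μ + ν) n := by
  simp only [psi, add_zero]
  rw [div_mul_div_comm, div_mul_div_comm,
    div_le_div_iff₀
      (mul_pos (rF_pos (by linarith) n) (rF_pos (by linarith) n))
      (mul_pos (rF_pos (by linarith) n) (rF_pos (by linarith) n))]
  simp only [risingFactorial, ← Finset.prod_mul_distrib]
  refine Finset.prod_le_prod (fun i _ => ?_) (fun i _ => ?_)
  · have hi : (0:ℝ) ≤ i := Nat.cast_nonneg i
    have h1 : (0:ℝ) < a + μ + i := by linarith
    have h2 : (0:ℝ) < a + ν + i := by linarith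
    have h3 : (0:ℝ) < c + i := by linarith
    have h4 : (0:ℝ) < c + (μ + ν) + i := by linarith
    positivity
  · have hi : (0:ℝ) ≤ i := Nat.cast_nonneg i
    nlinarith [mul_nonneg (mul_nonneg (mul_nonneg hμ hν) (sub_nonneg.2 hac))
      (show (0:ℝ) ≤ a + c + 2*i + μ + ν by linarith)]

lemma psi_sum {a c : ℝ} (μ ν : ℝ) (n : ℕ) (hac : c ≤ a) (hc : 0 < c)
    (hμ : 0 ≤ μ) (hν : 0 ≤ ν) :
    psi a c μ n + psi a c ν n ≤ psi a c 0 n + psi a c (μ + ν) n := by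
  have hx : 0 < psi a c μ n := psi_pos μ n hac (by linarith)
  have hwx : psi a c (μ + ν) n ≤ psi a c μ n := psi_anti n hac hc hμ (by linarith)
  have hxz : psi a c μ n ≤ psi a c 0 n := psi_anti n hac hc le_rfl hμ
  have hA := psi_factA μ ν n hac hc hμ hν
  nlinarith [mul_nonneg (sub_nonneg.2 hxz) (sub_nonneg.2 hwx), hx, hA]

lemma main_le {a c : ℝ} (μ ν : ℝ) (hac : c ≤ a) (hc : 0 < c)
    (hμ : 0 ≤ μ) (hν : 0 ≤ ν) {k j : ℕ} (hkj : k ≤ j) :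
    psi a c μ k * psi a c ν j + psi a c μ j * psi a c ν k ≤
      psi a c 0 k * psi a c (μ + ν) j + psi a c 0 j * psi a c (μ + ν) k := by
  obtain ⟨d, rfl⟩ : ∃ d, j = k + d := ⟨j - k, by omega⟩
  have hsplit : ∀ t : ℝ, psi a c t (k + d) = psi a c t k * psi (a + k) (c + k) t d := by
    intro t
    simp only [psi, rF_add]
    rw [div_mul_div_comm]
    ring_nf
  simp only [hsplit]
  have hk0 : (0:ℝ) ≤ (k:ℝ) := Nat.cast_nonneg k
  have hck : (0:ℝ) < c + k := by linarith
  have hack : c + (k:ℝ) ≤ a + k := by linarith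
  have h1 := psi_factA (a := a) (c := c) μ ν k hac hc hμ hν
  have h2 := psi_sum (a := a + k) (c := c + k) μ ν d hack hck hμ hν
  have hR : 0 ≤ psi (a + k) (c + k) μ d + psi (a + k) (c + k) ν d := by
    have p1 := psi_pos (a := a + k) (c := c + k) μ d hack (by linarith)
    have p2 := psi_pos (a := a + k) (c := c + k) ν d hack (by linarith)
    linarith
  have hP : 0 ≤ psi a c 0 k * psi a c (μ + ν) k :=
    mul_nonneg (psi_pos 0 k hac (by linarith)).le
      (psi_pos (μ + ν) k hac (by linarith)).le
  have key := mul_le_mul h1 h2 hR hP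
  nlinarith [key]

lemma main {a c : ℝ} (μ ν : ℝ) (hac : c ≤ a) (hc : 0 < c)
    (hμ : 0 ≤ μ) (hν : 0 ≤ ν) (k j : ℕ) :
    psi a c μ k * psi a c ν j + psi a c μ j * psi a c ν k ≤
      psi a c 0 k * psi a c (μ + ν) j + psi a c 0 j * psi a c (μ + ν) k := by
  rcases le_total k j with h | h
  · exact main_le μ ν hac hc hμ hν h
  · have := main_le μ ν hac hc hμ hν h
    linarith

lemma bracket_eq (a c μ ν : ℝ) (k j : ℕ) :
    risingFactorial (a + μ) k * risingFactorial (a + ν) j /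
        (risingFactorial (c + μ) k * risingFactorial (c + ν) j) -
      risingFactorial a k * risingFactorial (a + μ + ν) j /
        (risingFactorial c k * risingFactorial (c + μ + ν) j) =
    psi a c μ k * psi a c ν j - psi a c 0 k * psi a c (μ + ν) j := by
  simp only [psi, add_zero]
  rw [div_mul_div_comm, div_mul_div_comm, add_assoc a μ ν, add_assoc c μ ν]

lemma sum_pair_nonpos (F : ℕ → ℝ) (m : ℕ)
    (h : ∀ k ∈ Finset.range (m + 1), F k + F (m - k) ≤ 0) :
    ∑ k ∈ Finset.range (m + 1), F k ≤ 0 := by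
  have hrefl : ∑ k ∈ Finset.range (m + 1), F (m - k) =
      ∑ k ∈ Finset.range (m + 1), F k := by
    simpa using Finset.sum_range_reflect F (m + 1)
  have hs := Finset.sum_nonpos h
  rw [Finset.sum_add_distrib, hrefl] at hs
  linarith

theorem stmt_15 (a c μ ν : ℝ) (hac : c ≤ a) (hc : 0 < c) (hμ : 0 ≤ μ) (hν : 0 ≤ ν)
    (f : ℕ → ℝ) (hf : ∀ n, 0 ≤ f n) (m : ℕ) (hm : 1 ≤ m) :
    ∑ k ∈ Finset.range (m + 1),
        f k * f (m - k) / (k.factorial * (m - k).factorial) *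
          (risingFactorial (a + μ) k * risingFactorial (a + ν) (m - k) /
              (risingFactorial (c + μ) k * risingFactorial (c + ν) (m - k)) -
            risingFactorial a k * risingFactorial (a + μ + ν) (m - k) /
              (risingFactorial c k * risingFactorial (c + μ + ν) (m - k))) ≤ 0 := by
  apply sum_pair_nonpos
  intro k hk
  have hkm : k ≤ m := Nat.lt_succ_iff.1 (Finset.mem_range.1 hk)
  rw [Nat.sub_sub_self hkm]
  rw [bracket_eq a c μ ν k (m - k), bracket_eq a c μ ν (m - k) k]
  have hmain := main (a := a) (c := c) μ ν hac hc hμ hν k (m - k)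
  have hg : (0:ℝ) ≤ f k * f (m - k) / (k.factorial * (m - k).factorial) :=
    div_nonneg (mul_nonneg (hf k) (hf (m - k))) (by positivity)
  have hg' : (f (m - k) * f k / ((m - k).factorial * k.factorial) : ℝ) =
      f k * f (m - k) / (k.factorial * (m - k).factorial) := by ring
  rw [hg']
  nlinarith [mul_nonneg hg (sub_nonneg.2 hmain)]
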